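/- arXiv:2410.07134 — 3 statements merged into one kernel-verified Lean document; each statement's English description precedes it below -/
import Mathlib

section
/- If (u, ũ) is a Golay complementary sequence pair of length N, then the interleaved sequences v (with v_{2n-1} = u_n, v_{2n} = ũ_n) and ṽ (with ṽ_{2n-1} = u_n, ṽ_{2n} = -ũ_n) of length 2N form a Golay complementary pair. -/
/-!
Split the autocorrelation of an interleaved sequence by the parity of the lag. At an even lag
`2η` even positions only meet even ones and odd only odd ones, so the sum is the sum of the
autocorrelations of the two halves at lag `η`. At an odd lag only cross-correlations between the
two halves appear, and negating the second half flips their sign, so they cancel between the two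
interleavings.
-/

open scoped BigOperators

/-- Aperiodic autocorrelation of a length-`N` sequence `u : ℤ → ℂ`
(supported on `{0, …, N-1}`) at integer lag `ξ`. -/
noncomputable def acf (N : ℕ) (u : ℤ → ℂ) (ξ : ℤ) : ℂ :=
  ∑ n ∈ Finset.range N, u n * (starRingEnd ℂ) (u (n + ξ))

theorem Finset.sum_range_two_mul {M : Type*} [AddCommMonoid M] (N : ℕ) (f : ℕ → M) :
    ∑ n ∈ Finset.range (2 * N), f n = ∑ m ∈ Finset.range N, (f (2 * m) + f (2 * m + 1)) := by
  induction N with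
  | zero => simp
  | succ k ih =>
    rw [Nat.mul_succ, Finset.sum_range_succ, Finset.sum_range_succ, Finset.sum_range_succ, ih,
      add_assoc]

noncomputable def ccf (N : ℕ) (u v : ℤ → ℂ) (ξ : ℤ) : ℂ :=
  ∑ n ∈ Finset.range N, u n * (starRingEnd ℂ) (v (n + ξ))

theorem ccf_self (N : ℕ) (u : ℤ → ℂ) : ccf N u u = acf N u := rfl

theorem ccf_neg_left (N : ℕ) (u v : ℤ → ℂ) (ξ : ℤ) : ccf N (-u) v ξ = -ccf N u v ξ := by
  simp [ccf, Finset.sum_neg_distrib]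

theorem ccf_neg_right (N : ℕ) (u v : ℤ → ℂ) (ξ : ℤ) : ccf N u (-v) ξ = -ccf N u v ξ := by
  simp [ccf, Finset.sum_neg_distrib]

def interleave {α : Type*} (a b : ℤ → α) (n : ℤ) : α :=
  if n % 2 = 0 then a (n / 2) else b (n / 2)

theorem interleave_two_mul {α : Type*} (a b : ℤ → α) (k : ℤ) : interleave a b (2 * k) = a k := by
  simp [interleave]

theorem interleave_two_mul_add_one {α : Type*} (a b : ℤ → α) (k : ℤ) :
    interleave a b (2 * k + 1) = b k := by
  rw [interleave, if_neg (by omega), show (2 * k + 1) / 2 = k by omega]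

theorem ccf_interleave_two_mul (N : ℕ) (a b c d : ℤ → ℂ) (η : ℤ) :
    ccf (2 * N) (interleave a b) (interleave c d) (2 * η) = ccf N a c η + ccf N b d η := by
  rw [ccf, Finset.sum_range_two_mul, ccf, ccf, ← Finset.sum_add_distrib]
  refine Finset.sum_congr rfl fun m _ => ?_
  push_cast
  rw [show 2 * (m : ℤ) + 2 * η = 2 * (m + η) by ring,
    show 2 * (m : ℤ) + 1 + 2 * η = 2 * (m + η) + 1 by ring,
    interleave_two_mul, interleave_two_mul, interleave_two_mul_add_one,
    interleave_two_mul_add_one]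

theorem ccf_interleave_two_mul_add_one (N : ℕ) (a b c d : ℤ → ℂ) (η : ℤ) :
    ccf (2 * N) (interleave a b) (interleave c d) (2 * η + 1) =
      ccf N a d η + ccf N b c (η + 1) := by
  rw [ccf, Finset.sum_range_two_mul, ccf, ccf, ← Finset.sum_add_distrib]
  refine Finset.sum_congr rfl fun m _ => ?_
  push_cast
  rw [show 2 * (m : ℤ) + (2 * η + 1) = 2 * (m + η) + 1 by ring,
    show 2 * (m : ℤ) + 1 + (2 * η + 1) = 2 * (m + (η + 1)) by ring,
    interleave_two_mul, interleave_two_mul, interleave_two_mul_add_one,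
    interleave_two_mul_add_one]

theorem golay_interleave_general (N : ℕ) (u ut : ℤ → ℂ)
    (hGolay : ∀ ξ : ℤ, acf N u ξ + acf N ut ξ = if ξ = 0 then (2 * N : ℂ) else 0) :
    ∀ ξ : ℤ,
      acf (2 * N) (fun n => if n % 2 = 0 then u (n / 2) else ut (n / 2)) ξ +
        acf (2 * N) (fun n => if n % 2 = 0 then u (n / 2) else -ut (n / 2)) ξ =
      if ξ = 0 then (4 * N : ℂ) else 0 := by
  intro ξ
  change ccf (2 * N) (interleave u ut) (interleave u ut) ξ +
    ccf (2 * N) (interleave u (-ut)) (interleave u (-ut)) ξ = _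
  obtain ⟨η, rfl | rfl⟩ := Int.even_or_odd' ξ
  · rw [ccf_interleave_two_mul, ccf_interleave_two_mul, ccf_neg_left, ccf_neg_right, neg_neg,
      ccf_self, ccf_self, hGolay]
    split_ifs <;> first | omega | ring
  · rw [ccf_interleave_two_mul_add_one, ccf_interleave_two_mul_add_one, ccf_neg_left,
      ccf_neg_right, if_neg (by omega)]
    ring

/-- Interleaving construction: if (u, ut) is a Golay pair of length N, then the
interleaved sequences (u₀, ut₀, u₁, ut₁, …) and (u₀, -ut₀, u₁, -ut₁, …) form a
Golay pair of length 2N. -/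
theorem golay_interleave (N : ℕ) (u ut : ℤ → ℂ)
    (hsu : ∀ n : ℤ, (n < 0 ∨ (N : ℤ) ≤ n) → u n = 0)
    (hsut : ∀ n : ℤ, (n < 0 ∨ (N : ℤ) ≤ n) → ut n = 0)
    (hmu : ∀ n : ℤ, 0 ≤ n → n < (N : ℤ) → ‖u n‖ = 1)
    (hmut : ∀ n : ℤ, 0 ≤ n → n < (N : ℤ) → ‖ut n‖ = 1)
    (hGolay : ∀ ξ : ℤ, acf N u ξ + acf N ut ξ = if ξ = 0 then (2 * N : ℂ) else 0) :
    ∀ ξ : ℤ,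
      acf (2 * N) (fun n => if n % 2 = 0 then u (n / 2) else ut (n / 2)) ξ +
        acf (2 * N) (fun n => if n % 2 = 0 then u (n / 2) else -ut (n / 2)) ξ =
      if ξ = 0 then (4 * N : ℂ) else 0 :=
  golay_interleave_general N u ut hGolay
end

section
/- Let (u₁, ũ₁) and (u₂, ũ₂) be Golay complementary sequence pairs of lengths L₁ and L₂. Then the arrays U = [u₁u₂ᵀ; -ũ₁ũ₂ᴴE] and Ũ = [u₁ũ₂ᵀ; ũ₁u₂ᴴE] of size 2L₁ × L₂ (vertical block stacking) form a Golay complementary array pair, where E is the L₂×L₂ anti-identity (reversal) matrix. -/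
open scoped BigOperators

/-- 2D aperiodic autocorrelation of an `N₁ × N₂` array `U : ℤ → ℤ → ℂ`
(supported on `{0,…,N₁-1} × {0,…,N₂-1}`). -/
noncomputable def acf2 (N₁ N₂ : ℕ) (U : ℤ → ℤ → ℂ) (ξ₁ ξ₂ : ℤ) : ℂ :=
  ∑ n₁ ∈ Finset.range N₁, ∑ n₂ ∈ Finset.range N₂,
    U n₁ n₂ * (starRingEnd ℂ) (U (n₁ + ξ₁) (n₂ + ξ₂))

/-!
Both arrays are sums of two outer products: `U = u₁ ⊗ u₂ - ũ₁' ⊗ ũ₂ᴴE` and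
`Ũ = u₁ ⊗ ũ₂ + ũ₁' ⊗ u₂ᴴE`, where `ũ₁'` is `ũ₁` delayed by `L₁`. The 2D autocorrelation of such a
sum is a sum of products of 1D cross-correlations. Delaying and conjugate reversal preserve
autocorrelations, so the diagonal terms add up to `(R_{u₁} + R_{ũ₁}) (R_{u₂} + R_{ũ₂})`, a product
of two deltas. The cross terms cancel in pairs: the correlation of `f` with `gᴴE` is the
convolution `∑ₙ f n * g (L - 1 - n - ξ)`, which is symmetric in `f` and `g`.
-/

open Finset ComplexConjugate

def SupportedIn {M : Type*} [Zero M] (N : ℕ) (f : ℤ → M) : Prop :=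
  ∀ n : ℤ, (n < 0 ∨ (N : ℤ) ≤ n) → f n = 0

/-- The full aperiodic cross-correlation of `f` and `g` as soon as `f` is supported in `[0, N)`. -/
noncomputable def xcorr (N : ℕ) (f g : ℤ → ℂ) (ξ : ℤ) : ℂ :=
  ∑ n ∈ range N, f n * conj (g (n + ξ))

def delay {M : Type*} (k : ℤ) (f : ℤ → M) : ℤ → M := fun n => f (n - k)

/-- The sequence `fᴴE` of the paper: `f` reversed on `[0, N)` and conjugated. -/
def conjRev (N : ℕ) (f : ℤ → ℂ) : ℤ → ℂ := fun n => conj (f (N - 1 - n))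

namespace SupportedIn

section Zero

variable {M : Type*} [Zero M] {N N' : ℕ} {f : ℤ → M}

theorem mono (hf : SupportedIn N f) (h : N ≤ N') : SupportedIn N' f :=
  fun n hn => hf n (by omega)

theorem delay (hf : SupportedIn N f) (k : ℕ) : SupportedIn (k + N) (delay k f) :=
  fun n hn => hf _ (by push_cast at hn; omega)

end Zero

theorem sum_range_eq_finsum {M : Type*} [AddCommMonoid M] {N : ℕ} {f : ℤ → M}
    (hf : SupportedIn N f) : ∑ n ∈ range N, f n = ∑ᶠ n, f n := by
  rw [finsum_eq_sum_of_support_subset (s := (range N).map Nat.castEmbedding), sum_map]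
  · rfl
  intro n hn
  have hn' : 0 ≤ n ∧ n < N := by
    by_contra h
    exact hn (hf n (by omega))
  simp only [coe_map, Set.mem_image, coe_range, Set.mem_Iio, Nat.castEmbedding_apply]
  exact ⟨n.toNat, by omega, by omega⟩

end SupportedIn

theorem sum_range_comp_equiv {M : Type*} [AddCommMonoid M] {N N' : ℕ} {f : ℤ → M} (e : ℤ ≃ ℤ)
    (hf : SupportedIn N f) (hfe : SupportedIn N' (f ∘ e)) :
    ∑ n ∈ range N', f (e n) = ∑ n ∈ range N, f n := by
  rw [hf.sum_range_eq_finsum, ← finsum_comp_equiv e]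
  exact hfe.sum_range_eq_finsum

section Correlation

variable {N : ℕ} {f g : ℤ → ℂ}

theorem xcorr_of_le {N' : ℕ} (hf : SupportedIn N f) (h : N ≤ N') (ξ : ℤ) :
    xcorr N' f g ξ = xcorr N f g ξ :=
  sum_range_comp_equiv (f := fun n => f n * conj (g (n + ξ))) (Equiv.refl ℤ)
    (fun n hn => by simp [hf n hn]) (fun n hn => by simp [hf n (by omega)])

theorem xcorr_delay {N' : ℕ} (k : ℤ) (hf : SupportedIn N f) (hfk : SupportedIn N' (delay k f))
    (ξ : ℤ) : xcorr N' (delay k f) (delay k g) ξ = xcorr N f g ξ := by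
  unfold xcorr
  rw [← sum_range_comp_equiv (f := fun n => f n * conj (g (n + ξ))) (N' := N') (Equiv.subRight k)
    (fun n hn => by simp [hf n hn]) (fun n hn => by simp [show f (n - k) = 0 from hfk n hn])]
  refine sum_congr rfl fun n _ => ?_
  simp only [delay, Equiv.subRight_apply, sub_add_eq_add_sub]

theorem xcorr_conjRev_conjRev (hf : SupportedIn N f) (hg : SupportedIn N g) (ξ : ℤ) :
    xcorr N (conjRev N f) (conjRev N g) ξ = xcorr N g f ξ := by
  unfold xcorr
  rw [← sum_range_comp_equiv (f := fun n => g n * conj (f (n + ξ))) (N' := N)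
    ⟨fun n => N - 1 - n - ξ, fun n => N - 1 - n - ξ, fun n => by ring, fun n => by ring⟩
    (fun n hn => by simp [hg n hn]) (fun n hn => by simp [hf (N - 1 - n) (by omega)])]
  refine sum_congr rfl fun n _ => ?_
  simp only [conjRev, Equiv.coe_fn_mk, Complex.conj_conj]
  ring_nf

theorem xcorr_conjRev_right_comm (hf : SupportedIn N f) (hg : SupportedIn N g) (ξ : ℤ) :
    xcorr N f (conjRev N g) ξ = xcorr N g (conjRev N f) ξ := by
  unfold xcorr
  rw [← sum_range_comp_equiv (f := fun n => g n * conj (conjRev N f (n + ξ))) (N' := N)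
    ⟨fun n => N - 1 - n - ξ, fun n => N - 1 - n - ξ, fun n => by ring, fun n => by ring⟩
    (fun n hn => by simp [hg n hn]) (fun n hn => by simp [conjRev, hf n hn])]
  refine sum_congr rfl fun n _ => ?_
  simp only [conjRev, Equiv.coe_fn_mk, Complex.conj_conj]
  ring_nf

theorem xcorr_conjRev_left_comm (hf : SupportedIn N f) (hg : SupportedIn N g) (ξ : ℤ) :
    xcorr N (conjRev N f) g ξ = xcorr N (conjRev N g) f ξ := by
  unfold xcorr
  rw [← sum_range_comp_equiv (f := fun n => conjRev N g n * conj (f (n + ξ))) (N' := N)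
    ⟨fun n => N - 1 - n - ξ, fun n => N - 1 - n - ξ, fun n => by ring, fun n => by ring⟩
    (fun n hn => by simp [conjRev, hg (N - 1 - n) (by omega)])
    (fun n hn => by simp [hf (N - 1 - n) (by omega)])]
  refine sum_congr rfl fun n _ => ?_
  simp only [conjRev, Equiv.coe_fn_mk]
  ring_nf

end Correlation

section OuterProducts

variable (N₁ N₂ : ℕ) (a b c d : ℤ → ℂ) (ξ₁ ξ₂ : ℤ)

theorem acf2_add_outer :
    acf2 N₁ N₂ (fun n₁ n₂ => a n₁ * b n₂ + c n₁ * d n₂) ξ₁ ξ₂ =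
      xcorr N₁ a a ξ₁ * xcorr N₂ b b ξ₂ + xcorr N₁ a c ξ₁ * xcorr N₂ b d ξ₂ +
        xcorr N₁ c a ξ₁ * xcorr N₂ d b ξ₂ + xcorr N₁ c c ξ₁ * xcorr N₂ d d ξ₂ := by
  simp only [acf2, xcorr, sum_mul_sum, ← sum_add_distrib]
  refine sum_congr rfl fun n₁ _ => sum_congr rfl fun n₂ _ => ?_
  simp only [map_add, map_mul]
  ring

theorem acf2_sub_outer :
    acf2 N₁ N₂ (fun n₁ n₂ => a n₁ * b n₂ - c n₁ * d n₂) ξ₁ ξ₂ =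
      xcorr N₁ a a ξ₁ * xcorr N₂ b b ξ₂ - xcorr N₁ a c ξ₁ * xcorr N₂ b d ξ₂ -
        xcorr N₁ c a ξ₁ * xcorr N₂ d b ξ₂ + xcorr N₁ c c ξ₁ * xcorr N₂ d d ξ₂ := by
  simp only [acf2, xcorr, sum_mul_sum, ← sum_add_distrib, ← sum_sub_distrib]
  refine sum_congr rfl fun n₁ _ => sum_congr rfl fun n₂ _ => ?_
  simp only [map_sub, map_mul]
  ring

end OuterProducts

theorem acf2_vstack_add_acf2_vstack {L₁ L₂ : ℕ} {u₁ ut₁ u₂ ut₂ : ℤ → ℂ}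
    (hu₁ : SupportedIn L₁ u₁) (hut₁ : SupportedIn L₁ ut₁)
    (hu₂ : SupportedIn L₂ u₂) (hut₂ : SupportedIn L₂ ut₂) (ξ₁ ξ₂ : ℤ) :
    acf2 (2 * L₁) L₂
        (fun n₁ n₂ => if n₁ < (L₁ : ℤ) then u₁ n₁ * u₂ n₂
          else -(ut₁ (n₁ - L₁) * conj (ut₂ ((L₂ : ℤ) - 1 - n₂)))) ξ₁ ξ₂ +
      acf2 (2 * L₁) L₂
        (fun n₁ n₂ => if n₁ < (L₁ : ℤ) then u₁ n₁ * ut₂ n₂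
          else ut₁ (n₁ - L₁) * conj (u₂ ((L₂ : ℤ) - 1 - n₂))) ξ₁ ξ₂ =
      (xcorr L₁ u₁ u₁ ξ₁ + xcorr L₁ ut₁ ut₁ ξ₁) * (xcorr L₂ u₂ u₂ ξ₂ + xcorr L₂ ut₂ ut₂ ξ₂) := by
  have hU : (fun n₁ n₂ : ℤ => if n₁ < (L₁ : ℤ) then u₁ n₁ * u₂ n₂
      else -(ut₁ (n₁ - L₁) * conj (ut₂ ((L₂ : ℤ) - 1 - n₂)))) =
      fun n₁ n₂ => u₁ n₁ * u₂ n₂ - delay L₁ ut₁ n₁ * conjRev L₂ ut₂ n₂ := by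
    funext n₁ n₂
    unfold delay conjRev
    split_ifs with h
    · rw [hut₁ (n₁ - L₁) (by omega)]; ring
    · rw [hu₁ n₁ (by omega)]; ring
  have hV : (fun n₁ n₂ : ℤ => if n₁ < (L₁ : ℤ) then u₁ n₁ * ut₂ n₂
      else ut₁ (n₁ - L₁) * conj (u₂ ((L₂ : ℤ) - 1 - n₂))) =
      fun n₁ n₂ => u₁ n₁ * ut₂ n₂ + delay L₁ ut₁ n₁ * conjRev L₂ u₂ n₂ := by
    funext n₁ n₂
    unfold delay conjRev
    split_ifs with h
    · rw [hut₁ (n₁ - L₁) (by omega)]; ring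
    · rw [hu₁ n₁ (by omega)]; ring
  have hdelay : SupportedIn (2 * L₁) (delay L₁ ut₁) := (hut₁.delay L₁).mono (by omega)
  rw [hU, hV, acf2_sub_outer, acf2_add_outer, xcorr_of_le hu₁ (by omega),
    xcorr_delay _ hut₁ hdelay, xcorr_conjRev_conjRev hut₂ hut₂, xcorr_conjRev_conjRev hu₂ hu₂,
    xcorr_conjRev_right_comm hu₂ hut₂, xcorr_conjRev_left_comm hut₂ hu₂]
  ring

theorem golay_array_from_seq_vert_general (L₁ L₂ : ℕ) (u₁ ut₁ u₂ ut₂ : ℤ → ℂ)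
    (hsu₁ : ∀ n : ℤ, (n < 0 ∨ (L₁ : ℤ) ≤ n) → u₁ n = 0)
    (hsut₁ : ∀ n : ℤ, (n < 0 ∨ (L₁ : ℤ) ≤ n) → ut₁ n = 0)
    (hsu₂ : ∀ n : ℤ, (n < 0 ∨ (L₂ : ℤ) ≤ n) → u₂ n = 0)
    (hsut₂ : ∀ n : ℤ, (n < 0 ∨ (L₂ : ℤ) ≤ n) → ut₂ n = 0)
    (hG₁ : ∀ ξ : ℤ,
      (∑ n ∈ Finset.range L₁, u₁ n * (starRingEnd ℂ) (u₁ (n + ξ))) +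
        (∑ n ∈ Finset.range L₁, ut₁ n * (starRingEnd ℂ) (ut₁ (n + ξ))) =
      if ξ = 0 then (2 * L₁ : ℂ) else 0)
    (hG₂ : ∀ ξ : ℤ,
      (∑ n ∈ Finset.range L₂, u₂ n * (starRingEnd ℂ) (u₂ (n + ξ))) +
        (∑ n ∈ Finset.range L₂, ut₂ n * (starRingEnd ℂ) (ut₂ (n + ξ))) =
      if ξ = 0 then (2 * L₂ : ℂ) else 0) :
    ∀ ξ₁ ξ₂ : ℤ,
      acf2 (2 * L₁) L₂
          (fun n₁ n₂ => if n₁ < (L₁ : ℤ) then u₁ n₁ * u₂ n₂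
            else -(ut₁ (n₁ - L₁) * (starRingEnd ℂ) (ut₂ ((L₂ : ℤ) - 1 - n₂)))) ξ₁ ξ₂ +
        acf2 (2 * L₁) L₂
          (fun n₁ n₂ => if n₁ < (L₁ : ℤ) then u₁ n₁ * ut₂ n₂
            else ut₁ (n₁ - L₁) * (starRingEnd ℂ) (u₂ ((L₂ : ℤ) - 1 - n₂))) ξ₁ ξ₂ =
      if ξ₁ = 0 ∧ ξ₂ = 0 then (4 * L₁ * L₂ : ℂ) else 0 := by
  intro ξ₁ ξ₂
  rw [acf2_vstack_add_acf2_vstack hsu₁ hsut₁ hsu₂ hsut₂, xcorr, xcorr, xcorr, xcorr, hG₁, hG₂,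
    ite_zero_mul_ite_zero]
  congr 1
  ring

/-- Vertical-stacking construction of a Golay complementary array pair from two Golay
complementary sequence pairs (Proposition 2, construction (24)). -/
theorem golay_array_from_seq_vert (L₁ L₂ : ℕ) (u₁ ut₁ u₂ ut₂ : ℤ → ℂ)
    (hsu₁ : ∀ n : ℤ, (n < 0 ∨ (L₁ : ℤ) ≤ n) → u₁ n = 0)
    (hsut₁ : ∀ n : ℤ, (n < 0 ∨ (L₁ : ℤ) ≤ n) → ut₁ n = 0)
    (hsu₂ : ∀ n : ℤ, (n < 0 ∨ (L₂ : ℤ) ≤ n) → u₂ n = 0)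
    (hsut₂ : ∀ n : ℤ, (n < 0 ∨ (L₂ : ℤ) ≤ n) → ut₂ n = 0)
    (hmu₁ : ∀ n : ℤ, 0 ≤ n → n < (L₁ : ℤ) → ‖u₁ n‖ = 1)
    (hmut₁ : ∀ n : ℤ, 0 ≤ n → n < (L₁ : ℤ) → ‖ut₁ n‖ = 1)
    (hmu₂ : ∀ n : ℤ, 0 ≤ n → n < (L₂ : ℤ) → ‖u₂ n‖ = 1)
    (hmut₂ : ∀ n : ℤ, 0 ≤ n → n < (L₂ : ℤ) → ‖ut₂ n‖ = 1)
    (hG₁ : ∀ ξ : ℤ,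
      (∑ n ∈ Finset.range L₁, u₁ n * (starRingEnd ℂ) (u₁ (n + ξ))) +
        (∑ n ∈ Finset.range L₁, ut₁ n * (starRingEnd ℂ) (ut₁ (n + ξ))) =
      if ξ = 0 then (2 * L₁ : ℂ) else 0)
    (hG₂ : ∀ ξ : ℤ,
      (∑ n ∈ Finset.range L₂, u₂ n * (starRingEnd ℂ) (u₂ (n + ξ))) +
        (∑ n ∈ Finset.range L₂, ut₂ n * (starRingEnd ℂ) (ut₂ (n + ξ))) =
      if ξ = 0 then (2 * L₂ : ℂ) else 0) :
    ∀ ξ₁ ξ₂ : ℤ,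
      acf2 (2 * L₁) L₂
          (fun n₁ n₂ => if n₁ < (L₁ : ℤ) then u₁ n₁ * u₂ n₂
            else -(ut₁ (n₁ - L₁) * (starRingEnd ℂ) (ut₂ ((L₂ : ℤ) - 1 - n₂)))) ξ₁ ξ₂ +
        acf2 (2 * L₁) L₂
          (fun n₁ n₂ => if n₁ < (L₁ : ℤ) then u₁ n₁ * ut₂ n₂
            else ut₁ (n₁ - L₁) * (starRingEnd ℂ) (u₂ ((L₂ : ℤ) - 1 - n₂))) ξ₁ ξ₂ =
      if ξ₁ = 0 ∧ ξ₂ = 0 then (4 * L₁ * L₂ : ℂ) else 0 :=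
  golay_array_from_seq_vert_general L₁ L₂ u₁ ut₁ u₂ ut₂ hsu₁ hsut₁ hsu₂ hsut₂ hG₁ hG₂
end

section
/- A dual-polarized UPA RIS with configuration matrices (Υ_H, Υ_V) ∈ ℂ^{N_y×Ñ_z} produces a constant power-domain array factor A(φ,θ) = N_yN_z for all azimuth φ and elevation θ if and only if (Υ_H, Υ_V) form a Golay complementary array pair. -/
open scoped BigOperators

/-!
With `P_U(ψ₁, ψ₂) = ∑ U n₁ n₂ e^{-i(n₁ψ₁ + n₂ψ₂)}`, the two beams are `e^{-iψz} P_{Υ_H}(ψy, 2ψz)`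
and `P_{Υ_V}(ψy, 2ψz)`, so the array factor is `|P_{Υ_H}|² + |P_{Υ_V}|²` at `(ψy, 2ψz)`.
By the Wiener–Khinchin identity `|P_U|² = ∑_ξ acf_U(ξ) e^{i(ξ₁ψ₁ + ξ₂ψ₂)}` it is a trigonometric
polynomial whose coefficients are the summed autocorrelations. The characters
`(x, y) ↦ e^{i(ξ₁x + ξ₂y)}` are pairwise distinct, hence linearly independent (Dedekind), so this
polynomial is the constant `2 N_y Ñ_z` exactly when its coefficients are `2 N_y Ñ_z δ[ξ₁]δ[ξ₂]`.
-/

open Finset Complex ComplexConjugate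
open scoped Real

theorem linearIndependent_addChar (A L : Type*) [AddMonoid A] [CommRing L] [IsDomain L] :
    LinearIndependent L ((⇑) : AddChar A L → A → L) :=
  (linearIndependent_monoidHom (Multiplicative A) L).comp _ AddChar.toMonoidHomEquiv.injective

theorem eq_of_forall_exp_int_mul_I_eq {a b : ℤ}
    (h : ∀ x : ℝ, exp (a * x * I) = exp (b * x * I)) : a = b := by
  by_contra hab
  have hd : ((a - b : ℤ) : ℂ) ≠ 0 := by exact_mod_cast sub_ne_zero.mpr hab
  set x : ℝ := π / (a - b : ℤ)
  have key := h x
  rw [show (a : ℂ) * x * I = b * x * I + π * I by simp only [x]; push_cast at hd ⊢; field_simp; ring,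
    exp_add, exp_pi_mul_I] at key
  exact exp_ne_zero (b * x * I) (by linear_combination -key / 2)

noncomputable def expChar (ξ : ℤ × ℤ) : AddChar (ℝ × ℝ) ℂ where
  toFun x := exp ((ξ.1 * x.1 + ξ.2 * x.2) * I)
  map_zero_eq_one' := by simp
  map_add_eq_mul' x y := by rw [← exp_add, Prod.fst_add, Prod.snd_add]; push_cast; ring_nf

theorem expChar_apply (ξ : ℤ × ℤ) (x : ℝ × ℝ) :
    expChar ξ x = exp ((ξ.1 * x.1 + ξ.2 * x.2) * I) := rfl

theorem expChar_injective : Function.Injective expChar := by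
  intro ξ η h
  have hx (x : ℝ × ℝ) := DFunLike.congr_fun h x
  simp only [expChar_apply] at hx
  ext
  · exact eq_of_forall_exp_int_mul_I_eq fun x => by simpa [mul_assoc] using hx (x, 0)
  · exact eq_of_forall_exp_int_mul_I_eq fun x => by simpa [mul_assoc] using hx (0, x)

theorem forall_sum_mul_exp_eq_iff (s : Finset (ℤ × ℤ)) (c d : ℤ × ℤ → ℂ) :
    (∀ x y : ℝ, ∑ ξ ∈ s, c ξ * exp ((ξ.1 * x + ξ.2 * y) * I)
      = ∑ ξ ∈ s, d ξ * exp ((ξ.1 * x + ξ.2 * y) * I)) ↔ ∀ ξ ∈ s, c ξ = d ξ := by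
  refine ⟨fun h ξ hξ => ?_, fun h x y => sum_congr rfl fun ξ hξ => by rw [h ξ hξ]⟩
  have hli := (linearIndependent_addChar (ℝ × ℝ) ℂ).comp expChar expChar_injective
  refine sub_eq_zero.mp (linearIndependent_iff'.mp hli s (fun ξ => c ξ - d ξ) ?_ ξ hξ)
  funext x
  simpa [Finset.sum_apply, sub_mul, expChar_apply, sub_eq_zero] using h x.1 x.2

noncomputable def lagWindow (N₁ N₂ : ℕ) : Finset (ℤ × ℤ) :=
  Ioo (-(N₁ : ℤ)) N₁ ×ˢ Ioo (-(N₂ : ℤ)) N₂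

theorem zero_mem_lagWindow {N₁ N₂ : ℕ} : (0 : ℤ × ℤ) ∈ lagWindow N₁ N₂ ↔ 0 < N₁ ∧ 0 < N₂ := by
  simp only [lagWindow, Prod.mk_zero_zero.symm, mem_product, mem_Ioo]
  omega

theorem sum_box_eq_sum_lagWindow {M : Type*} [AddCommMonoid M] {N₁ N₂ n₁ n₂ : ℕ}
    (hn₁ : n₁ < N₁) (hn₂ : n₂ < N₂) (g : ℤ → ℤ → M)
    (hg : ∀ m₁ m₂ : ℤ, (m₁ < 0 ∨ (N₁ : ℤ) ≤ m₁ ∨ m₂ < 0 ∨ (N₂ : ℤ) ≤ m₂) → g m₁ m₂ = 0) :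
    ∑ m ∈ range N₁ ×ˢ range N₂, g m.1 m.2
      = ∑ ξ ∈ lagWindow N₁ N₂, g (n₁ + ξ.1) (n₂ + ξ.2) := by
  refine sum_bij_ne_zero (fun m _ _ => ((m.1 : ℤ) - n₁, (m.2 : ℤ) - n₂)) ?_ ?_ ?_ ?_
  · intro m hm _
    simp only [lagWindow, mem_product, mem_range, mem_Ioo] at hm ⊢
    omega
  · intro m _ _ m' _ _ h
    simp only [Prod.mk.injEq] at h
    ext <;> omega
  · intro ξ _ hξ
    have hbox : 0 ≤ n₁ + ξ.1 ∧ n₁ + ξ.1 < N₁ ∧ 0 ≤ n₂ + ξ.2 ∧ n₂ + ξ.2 < N₂ := by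
      by_contra hout
      exact hξ (hg _ _ (by omega))
    refine ⟨((n₁ + ξ.1).toNat, (n₂ + ξ.2).toNat), ?_, ?_, ?_⟩
    · simp only [mem_product, mem_range]
      omega
    · simpa [Int.toNat_of_nonneg hbox.1, Int.toNat_of_nonneg hbox.2.2.1] using hξ
    · ext <;> simp <;> omega
  · intro m _ _
    simp

theorem acf2_eq_sum_box (N₁ N₂ : ℕ) (U : ℤ → ℤ → ℂ) (ξ₁ ξ₂ : ℤ) :
    acf2 N₁ N₂ U ξ₁ ξ₂
      = ∑ n ∈ range N₁ ×ˢ range N₂, U n.1 n.2 * conj (U (n.1 + ξ₁) (n.2 + ξ₂)) := by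
  rw [acf2, sum_product]

theorem acf2_eq_zero_of_notMem_lagWindow {N₁ N₂ : ℕ} {U : ℤ → ℤ → ℂ}
    (hU : ∀ n₁ n₂ : ℤ, (n₁ < 0 ∨ (N₁ : ℤ) ≤ n₁ ∨ n₂ < 0 ∨ (N₂ : ℤ) ≤ n₂) → U n₁ n₂ = 0)
    {ξ : ℤ × ℤ} (hξ : ξ ∉ lagWindow N₁ N₂) : acf2 N₁ N₂ U ξ.1 ξ.2 = 0 := by
  rw [acf2_eq_sum_box]
  refine sum_eq_zero fun n hn => ?_
  simp only [lagWindow, mem_product, mem_range, mem_Ioo, not_and_or, not_lt] at hn hξ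
  rw [hU (n.1 + ξ.1) (n.2 + ξ.2) (by omega), map_zero, mul_zero]

theorem sum_lagWindow_ite_mul_exp (N₁ N₂ : ℕ) (x y : ℝ) :
    ∑ ξ ∈ lagWindow N₁ N₂, (if ξ.1 = 0 ∧ ξ.2 = 0 then (2 * N₁ * N₂ : ℂ) else 0)
      * exp ((ξ.1 * x + ξ.2 * y) * I) = 2 * N₁ * N₂ := by
  simp only [← Prod.mk_eq_zero, Prod.mk.eta, ite_mul, zero_mul, sum_ite_eq', zero_mem_lagWindow]
  split_ifs with h
  · simp
  · rcases not_and_or.mp h with h | h <;> simp_all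

noncomputable def dtft2 (N₁ N₂ : ℕ) (U : ℤ → ℤ → ℂ) (ψ₁ ψ₂ : ℝ) : ℂ :=
  ∑ n₁ ∈ range N₁, ∑ n₂ ∈ range N₂, U n₁ n₂ * exp (-((n₁ : ℂ) * ψ₁ + (n₂ : ℂ) * ψ₂) * I)

theorem sq_norm_dtft2_eq_sum_acf2 {N₁ N₂ : ℕ} {U : ℤ → ℤ → ℂ}
    (hU : ∀ n₁ n₂ : ℤ, (n₁ < 0 ∨ (N₁ : ℤ) ≤ n₁ ∨ n₂ < 0 ∨ (N₂ : ℤ) ≤ n₂) → U n₁ n₂ = 0)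
    (ψ₁ ψ₂ : ℝ) :
    ((‖dtft2 N₁ N₂ U ψ₁ ψ₂‖ ^ 2 : ℝ) : ℂ)
      = ∑ ξ ∈ lagWindow N₁ N₂, acf2 N₁ N₂ U ξ.1 ξ.2 * exp ((ξ.1 * ψ₁ + ξ.2 * ψ₂) * I) := by
  set e : ℤ → ℤ → ℂ := fun m₁ m₂ => exp ((m₁ * ψ₁ + m₂ * ψ₂) * I) with he
  have hconj (m₁ m₂ : ℤ) : conj (e m₁ m₂) = exp (-((m₁ : ℂ) * ψ₁ + (m₂ : ℂ) * ψ₂) * I) := by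
    rw [he, ← exp_conj]
    congr 1
    simp only [map_mul, map_add, map_intCast, conj_ofReal, conj_I]
    ring
  have hshift (n₁ n₂ ξ₁ ξ₂ : ℤ) : conj (e n₁ n₂) * e (n₁ + ξ₁) (n₂ + ξ₂) = e ξ₁ ξ₂ := by
    rw [hconj, he, ← exp_add]
    congr 1
    push_cast
    ring
  have hF : dtft2 N₁ N₂ U ψ₁ ψ₂ = ∑ n ∈ range N₁ ×ˢ range N₂, U n.1 n.2 * conj (e n.1 n.2) := by
    rw [dtft2, sum_product]
    simp only [hconj]
    norm_cast
  have hconjF : conj (dtft2 N₁ N₂ U ψ₁ ψ₂)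
      = ∑ m ∈ range N₁ ×ˢ range N₂, conj (U m.1 m.2) * e m.1 m.2 := by
    simp only [hF, map_sum, map_mul, conj_conj]
  push_cast
  rw [← mul_conj', hconjF, hF, sum_mul_sum]
  calc _ = ∑ n ∈ range N₁ ×ˢ range N₂, ∑ ξ ∈ lagWindow N₁ N₂,
        U n.1 n.2 * conj (U (n.1 + ξ.1) (n.2 + ξ.2)) * e ξ.1 ξ.2 := by
        refine sum_congr rfl fun n hn => ?_
        rw [mem_product, mem_range, mem_range] at hn
        rw [sum_box_eq_sum_lagWindow hn.1 hn.2
          (fun m₁ m₂ => U n.1 n.2 * conj (e n.1 n.2) * (conj (U m₁ m₂) * e m₁ m₂))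
          fun m₁ m₂ hm => by rw [hU m₁ m₂ hm, map_zero, zero_mul, mul_zero]]
        refine sum_congr rfl fun ξ _ => ?_
        rw [← hshift n.1 n.2 ξ.1 ξ.2]
        ring
    _ = _ := by
        rw [sum_comm]
        simp only [acf2_eq_sum_box, sum_mul]
        rfl

theorem sum_mul_exp_odd_eq_exp_mul_dtft2 (N₁ N₂ : ℕ) (U : ℤ → ℤ → ℂ) (ψ₁ ψ₂ : ℝ) :
    ∑ n₁ ∈ range N₁, ∑ n₂ ∈ range N₂,
        U n₁ n₂ * exp (-((n₁ : ℂ) * ψ₁ + (2 * (n₂ : ℂ) + 1) * ψ₂) * I)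
      = exp ((-ψ₂ : ℝ) * I) * dtft2 N₁ N₂ U ψ₁ (2 * ψ₂) := by
  simp only [dtft2, mul_sum]
  refine sum_congr rfl fun n₁ _ => sum_congr rfl fun n₂ _ => ?_
  rw [mul_left_comm, ← exp_add]
  congr 2
  push_cast
  ring

theorem sum_mul_exp_even_eq_dtft2 (N₁ N₂ : ℕ) (U : ℤ → ℤ → ℂ) (ψ₁ ψ₂ : ℝ) :
    ∑ n₁ ∈ range N₁, ∑ n₂ ∈ range N₂,
        U n₁ n₂ * exp (-((n₁ : ℂ) * ψ₁ + 2 * (n₂ : ℂ) * ψ₂) * I)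
      = dtft2 N₁ N₂ U ψ₁ (2 * ψ₂) := by
  simp only [dtft2]
  congr! 5
  push_cast
  ring

theorem arrayFactor_eq_sum_acf2 {N₁ N₂ : ℕ} {UH UV : ℤ → ℤ → ℂ}
    (hUH : ∀ n₁ n₂ : ℤ, (n₁ < 0 ∨ (N₁ : ℤ) ≤ n₁ ∨ n₂ < 0 ∨ (N₂ : ℤ) ≤ n₂) → UH n₁ n₂ = 0)
    (hUV : ∀ n₁ n₂ : ℤ, (n₁ < 0 ∨ (N₁ : ℤ) ≤ n₁ ∨ n₂ < 0 ∨ (N₂ : ℤ) ≤ n₂) → UV n₁ n₂ = 0)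
    (ψ₁ ψ₂ : ℝ) :
    ((‖∑ n₁ ∈ range N₁, ∑ n₂ ∈ range N₂,
          UH n₁ n₂ * exp (-((n₁ : ℂ) * ψ₁ + (2 * (n₂ : ℂ) + 1) * ψ₂) * I)‖ ^ 2 +
        ‖∑ n₁ ∈ range N₁, ∑ n₂ ∈ range N₂,
          UV n₁ n₂ * exp (-((n₁ : ℂ) * ψ₁ + 2 * (n₂ : ℂ) * ψ₂) * I)‖ ^ 2 : ℝ) : ℂ)
      = ∑ ξ ∈ lagWindow N₁ N₂, (acf2 N₁ N₂ UH ξ.1 ξ.2 + acf2 N₁ N₂ UV ξ.1 ξ.2)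
          * exp ((ξ.1 * ψ₁ + ξ.2 * (2 * ψ₂ : ℝ)) * I) := by
  rw [sum_mul_exp_odd_eq_exp_mul_dtft2, sum_mul_exp_even_eq_dtft2, norm_mul,
    norm_exp_ofReal_mul_I, one_mul, ofReal_add, sq_norm_dtft2_eq_sum_acf2 hUH,
    sq_norm_dtft2_eq_sum_acf2 hUV, ← sum_add_distrib]
  simp only [add_mul]

theorem broad_beam_iff_golay_general (Ny Nzt : ℕ) (UH UV : ℤ → ℤ → ℂ)
    (hsUH : ∀ n₁ n₂ : ℤ,
      (n₁ < 0 ∨ (Ny : ℤ) ≤ n₁ ∨ n₂ < 0 ∨ (Nzt : ℤ) ≤ n₂) → UH n₁ n₂ = 0)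
    (hsUV : ∀ n₁ n₂ : ℤ,
      (n₁ < 0 ∨ (Ny : ℤ) ≤ n₁ ∨ n₂ < 0 ∨ (Nzt : ℤ) ≤ n₂) → UV n₁ n₂ = 0) :
    (∀ ψy ψz : ℝ,
      ‖∑ n₁ ∈ Finset.range Ny, ∑ n₂ ∈ Finset.range Nzt,
          UH n₁ n₂ *
            Complex.exp (-((n₁ : ℂ) * (ψy : ℂ) + (2 * (n₂ : ℂ) + 1) * (ψz : ℂ)) *
              Complex.I)‖ ^ 2 +
        ‖∑ n₁ ∈ Finset.range Ny, ∑ n₂ ∈ Finset.range Nzt,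
          UV n₁ n₂ *
            Complex.exp (-((n₁ : ℂ) * (ψy : ℂ) + 2 * (n₂ : ℂ) * (ψz : ℂ)) *
              Complex.I)‖ ^ 2 =
      ((Ny : ℝ) * (2 * Nzt))) ↔
      (∀ ξ₁ ξ₂ : ℤ,
        acf2 Ny Nzt UH ξ₁ ξ₂ + acf2 Ny Nzt UV ξ₁ ξ₂ =
          if ξ₁ = 0 ∧ ξ₂ = 0 then (2 * Ny * Nzt : ℂ) else 0) := by
  have hdouble : Function.Surjective fun ψz : ℝ => 2 * ψz := mul_left_surjective₀ two_ne_zero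
  calc _ ↔ ∀ x y : ℝ,
        ∑ ξ ∈ lagWindow Ny Nzt, (acf2 Ny Nzt UH ξ.1 ξ.2 + acf2 Ny Nzt UV ξ.1 ξ.2)
          * exp ((ξ.1 * x + ξ.2 * y) * I)
        = ∑ ξ ∈ lagWindow Ny Nzt, (if ξ.1 = 0 ∧ ξ.2 = 0 then (2 * Ny * Nzt : ℂ) else 0)
          * exp ((ξ.1 * x + ξ.2 * y) * I) := by
        refine forall_congr' fun ψy => (forall_congr' fun ψz => ?_).trans hdouble.forall.symm
        rw [← ofReal_inj, arrayFactor_eq_sum_acf2 hsUH hsUV, sum_lagWindow_ite_mul_exp]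
        push_cast
        ring_nf
    _ ↔ ∀ ξ ∈ lagWindow Ny Nzt, acf2 Ny Nzt UH ξ.1 ξ.2 + acf2 Ny Nzt UV ξ.1 ξ.2
          = if ξ.1 = 0 ∧ ξ.2 = 0 then (2 * Ny * Nzt : ℂ) else 0 :=
        forall_sum_mul_exp_eq_iff _ _ _
    _ ↔ _ := by
        refine ⟨fun h ξ₁ ξ₂ => ?_, fun h ξ _ => h ξ.1 ξ.2⟩
        by_cases hξ : (ξ₁, ξ₂) ∈ lagWindow Ny Nzt
        · exact h (ξ₁, ξ₂) hξ
        rw [acf2_eq_zero_of_notMem_lagWindow hsUH hξ, acf2_eq_zero_of_notMem_lagWindow hsUV hξ]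
        split_ifs with h0
        · obtain ⟨rfl, rfl⟩ := h0
          rw [Prod.mk_zero_zero, zero_mem_lagWindow] at hξ
          rcases not_and_or.mp hξ with h | h <;> simp_all
        · simp

/-- Proposition 1: a dual-polarized UPA RIS with configuration matrices (Υ_H, Υ_V)
(of size N_y × Ñ_z each, with N_z = 2Ñ_z) produces a spatially flat power-domain
array factor A(φ,θ) = N_y N_z for all observation angles if and only if (Υ_H, Υ_V)
form a Golay complementary array pair. -/
theorem broad_beam_iff_golay (Ny Nzt : ℕ) (UH UV : ℤ → ℤ → ℂ)
    (hsUH : ∀ n₁ n₂ : ℤ,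
      (n₁ < 0 ∨ (Ny : ℤ) ≤ n₁ ∨ n₂ < 0 ∨ (Nzt : ℤ) ≤ n₂) → UH n₁ n₂ = 0)
    (hsUV : ∀ n₁ n₂ : ℤ,
      (n₁ < 0 ∨ (Ny : ℤ) ≤ n₁ ∨ n₂ < 0 ∨ (Nzt : ℤ) ≤ n₂) → UV n₁ n₂ = 0)
    (hmUH : ∀ n₁ n₂ : ℤ, 0 ≤ n₁ → n₁ < (Ny : ℤ) → 0 ≤ n₂ → n₂ < (Nzt : ℤ) →
      ‖UH n₁ n₂‖ = 1)
    (hmUV : ∀ n₁ n₂ : ℤ, 0 ≤ n₁ → n₁ < (Ny : ℤ) → 0 ≤ n₂ → n₂ < (Nzt : ℤ) →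
      ‖UV n₁ n₂‖ = 1) :
    (∀ ψy ψz : ℝ,
      ‖∑ n₁ ∈ Finset.range Ny, ∑ n₂ ∈ Finset.range Nzt,
          UH n₁ n₂ *
            Complex.exp (-((n₁ : ℂ) * (ψy : ℂ) + (2 * (n₂ : ℂ) + 1) * (ψz : ℂ)) *
              Complex.I)‖ ^ 2 +
        ‖∑ n₁ ∈ Finset.range Ny, ∑ n₂ ∈ Finset.range Nzt,
          UV n₁ n₂ *
            Complex.exp (-((n₁ : ℂ) * (ψy : ℂ) + 2 * (n₂ : ℂ) * (ψz : ℂ)) *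
              Complex.I)‖ ^ 2 =
      ((Ny : ℝ) * (2 * Nzt))) ↔
      (∀ ξ₁ ξ₂ : ℤ,
        acf2 Ny Nzt UH ξ₁ ξ₂ + acf2 Ny Nzt UV ξ₁ ξ₂ =
          if ξ₁ = 0 ∧ ξ₂ = 0 then (2 * Ny * Nzt : ℂ) else 0) :=
  broad_beam_iff_golay_general Ny Nzt UH UV hsUH hsUV
end
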